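/- arXiv:1010.3821 — 4 statements merged into one kernel-verified Lean document; each statement's English description precedes it below -/
import Mathlib

section
/- Let r > 1 and let i, p be sequences with i(n) = o(p(n)) and p(n) → ∞. Then the sequence [(1+r)^(r-1)/r^r]^(p(n)/2) · r^(i(n)/2) tends to 0 as n → ∞. -/
open Filter Real

/-! Since `(1 + r) ^ (r - 1) < r ^ r` for `r > 1`, the base `c` of the first factor lies in
`(0, 1)`. Writing the product as `exp (p n / 2 * (log c + i n / p n * log r))`, the bracket tends
to `log c < 0` while `p n / 2 → ∞`, so the exponent tends to `-∞`. -/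

theorem one_add_rpow_sub_one_lt_rpow_self {r : ℝ} (hr : 1 < r) :
    (1 + r) ^ (r - 1) < r ^ r := by
  have hr0 : 0 < r := by linarith
  rw [← log_lt_log_iff (by positivity) (by positivity), log_rpow (by positivity),
    log_rpow hr0]
  have hsplit : log (1 + r) = log r + log (1 + r⁻¹) := by
    rw [← log_mul hr0.ne' (by positivity), mul_add, mul_inv_cancel₀ hr0.ne', mul_one, add_comm]
  have hlog_one_add : log (1 + r⁻¹) < r⁻¹ := by
    have := add_one_lt_exp (inv_pos.2 hr0).ne'
    rw [add_comm] at this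
    exact (log_lt_iff_lt_exp (by positivity)).2 this
  have hlog_self : 1 - r⁻¹ ≤ log r := one_sub_inv_le_log_of_pos hr0
  -- `(r - 1) * log (1 + r⁻¹) < (r - 1) / r = 1 - r⁻¹ ≤ log r`
  have hscaled := mul_lt_mul_of_pos_left hlog_one_add (sub_pos.2 hr)
  have hr_inv : r * r⁻¹ = 1 := mul_inv_cancel₀ hr0.ne'
  rw [hsplit]
  nlinarith

theorem tendsto_rpow_mul_rpow_zero_of_div_tendsto_zero {ι : Type*} {l : Filter ι}
    {c a : ℝ} (hc0 : 0 < c) (hc1 : c < 1) (ha : 0 < a) {p i : ι → ℝ}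
    (hp : Tendsto p l atTop) (hip : Tendsto (fun n => i n / p n) l (nhds 0)) :
    Tendsto (fun n => c ^ p n * a ^ i n) l (nhds 0) := by
  have hbracket : Tendsto (fun n => log c + i n / p n * log a) l (nhds (log c)) := by
    simpa using (hip.mul_const (log a)).const_add (log c)
  have hexponent := hp.atTop_mul_neg (log_neg hc0 hc1) hbracket
  refine (tendsto_exp_atBot.comp hexponent).congr' ?_
  filter_upwards [hp.eventually_gt_atTop 0] with n hn
  rw [Function.comp_apply, rpow_def_of_pos hc0, rpow_def_of_pos ha, ← exp_add]
  field_simp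

theorem bound_tendsto_zero_general (r : ℝ) (hr : 1 < r) (i p : ℕ → ℝ)
    (hptop : Tendsto p atTop atTop)
    (hip : Tendsto (fun n => i n / p n) atTop (nhds 0)) :
    Tendsto (fun n => ((1 + r) ^ (r - 1) / r ^ r) ^ (p n / 2) * r ^ (i n / 2))
      atTop (nhds 0) := by
  have hr0 : 0 < r := by linarith
  refine tendsto_rpow_mul_rpow_zero_of_div_tendsto_zero (by positivity)
    ((div_lt_one (by positivity)).2 (one_add_rpow_sub_one_lt_rpow_self hr)) hr0
    (hptop.atTop_div_const two_pos) ?_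
  simpa only [div_div_div_cancel_right₀ (two_ne_zero (α := ℝ))] using hip

/-- If `r > 1`, `p n → ∞` and `i n / p n → 0` with `i, p` nonnegative, then
`[(1+r)^(r-1)/r^r]^(p n / 2) * r^(i n / 2) → 0`. -/
theorem bound_tendsto_zero (r : ℝ) (hr : 1 < r) (i p : ℕ → ℝ)
    (hi : ∀ n, 0 ≤ i n) (hp : ∀ n, 0 ≤ p n)
    (hptop : Tendsto p atTop atTop)
    (hip : Tendsto (fun n => i n / p n) atTop (nhds 0)) :
    Tendsto (fun n => ((1 + r) ^ (r - 1) / r ^ r) ^ (p n / 2) * r ^ (i n / 2))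
      atTop (nhds 0) :=
  bound_tendsto_zero_general r hr i p hptop hip
end

section
/- For all real s > r > 1, the quantity (1+r)^(r-1) · ((rs-1)/(s-1))^(-r(s-1)/s) is strictly less than 1. -/
/-! With `x := (r - 1) s / (s - 1)`, which lies in `(0, r)` because `s > r`, the base is `1 + x`
and the exponent is `r (r - 1) / x`. After taking logarithms the claim becomes
`log (1 + r) / r < log (1 + x) / x`: secant slopes of the strictly concave `log` from `1`
decrease. -/

open Real Set

theorem strictAntiOn_log_one_add_div_self :
    StrictAntiOn (fun x => log (1 + x) / x) (Ioi 0) := by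
  intro x hx y _ hxy
  rw [mem_Ioi] at hx
  have key := strictConcaveOn_log_Ioi.secant_strict_mono (mem_Ioi.2 one_pos)
    (mem_Ioi.2 (by linarith : (0 : ℝ) < 1 + x)) (mem_Ioi.2 (by linarith : (0 : ℝ) < 1 + y))
    (by linarith) (by linarith) (by linarith)
  simpa only [log_one, sub_zero, add_sub_cancel_left] using key

/-- For all `s > r > 1`, `(1+r)^(r-1) * ((rs-1)/(s-1))^(-r(s-1)/s) < 1`. -/
theorem two_rate_bound_lt_one (r s : ℝ) (hr : 1 < r) (hs : r < s) :
    (1 + r) ^ (r - 1) * ((r * s - 1) / (s - 1)) ^ (-(r * (s - 1) / s)) < 1 := by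
  have hs0 : 0 < s := by linarith
  have hs1 : 0 < s - 1 := by linarith
  have hrr : 0 < r * (r - 1) := by nlinarith
  set x := (r - 1) * s / (s - 1) with hx_def
  have hx : 0 < x := by positivity
  have hxr : x < r := by rw [hx_def, div_lt_iff₀ hs1]; nlinarith
  have hbase : (r * s - 1) / (s - 1) = 1 + x := by rw [hx_def]; field_simp; ring
  have hexp : r * (s - 1) / s = r * (r - 1) / x := by
    have hr1 : r - 1 ≠ 0 := by linarith
    rw [hx_def]; field_simp
  rw [hbase, hexp, rpow_neg (by positivity), ← div_eq_mul_inv, div_lt_one (by positivity),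
    ← log_lt_log_iff (by positivity) (by positivity), log_rpow (by positivity),
    log_rpow (by positivity)]
  calc (r - 1) * log (1 + r) = r * (r - 1) * (log (1 + r) / r) := by field_simp
    _ < r * (r - 1) * (log (1 + x) / x) :=
      mul_lt_mul_of_pos_left (strictAntiOn_log_one_add_div_self hx (hx.trans hxr) hxr) hrr
    _ = r * (r - 1) / x * log (1 + x) := by ring
end

section
/- The function δ(r) = (r-1)/((r+1)^((r-1)/r) - 1) - 1 is strictly decreasing on (1, ∞). -/
/-!
Write `F(r) = (r + 1) ^ ((r - 1) / r) = exp (g r)` with `g r = log (r + 1) * (1 - 1 / r)`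
(`deltaExponent`), so that `F 1 = 1` and `δ(r) + 1 = (r - 1) / (F r - F 1)` is the reciprocal of
the slope of the secant of `F` through `1`. It therefore suffices that `F` is strictly convex on
`[1, ∞)`, i.e. that `(exp ∘ g)'' = exp g * (g' ^ 2 + g'') > 0`; clearing denominators,
`r ^ 4 (r + 1) ^ 2 (g' ^ 2 + g'') = ((r + 1) log (r + 1) - 2 r) ^ 2 + r ^ 2 (r - 1)`.
-/

open Real Set

theorem StrictConvexOn.secant_inv_strictAntiOn {𝕜 : Type*} [Field 𝕜] [LinearOrder 𝕜]
    [IsStrictOrderedRing 𝕜] {f : 𝕜 → 𝕜} {a : 𝕜} (hf : StrictConvexOn 𝕜 (Ici a) f)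
    (hfa : ∀ x ∈ Ioi a, f a < f x) :
    StrictAntiOn (fun x => (x - a) / (f x - f a)) (Ioi a) := by
  intro x hx y hy hxy
  have hx' : a < x := hx
  have hy' : a < y := hy
  have hslope : (f x - f a) / (x - a) < (f y - f a) / (y - a) :=
    hf.secant_strict_mono self_mem_Ici hx'.le hy'.le hx'.ne' hy'.ne' hxy
  have hpos : 0 < (f x - f a) / (x - a) := div_pos (sub_pos.2 (hfa x hx)) (sub_pos.2 hx')
  simpa only [one_div, inv_div] using one_div_lt_one_div_of_lt hpos hslope

theorem strictConvexOn_exp_comp {D : Set ℝ} (hD : Convex ℝ D) {g g' g'' : ℝ → ℝ}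
    (hg : ContinuousOn g D) (hg' : ∀ x ∈ interior D, HasDerivAt g (g' x) x)
    (hg'' : ∀ x ∈ interior D, HasDerivAt g' (g'' x) x)
    (hpos : ∀ x ∈ interior D, 0 < g' x ^ 2 + g'' x) :
    StrictConvexOn ℝ D (fun x => exp (g x)) := by
  refine strictConvexOn_of_deriv2_pos hD (continuous_exp.comp_continuousOn hg) fun x hx => ?_
  have hderiv : deriv (fun y => exp (g y)) =ᶠ[nhds x] fun y => exp (g y) * g' y :=
    Filter.eventually_of_mem (isOpen_interior.mem_nhds hx) fun y hy => ((hg' y hy).exp).deriv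
  have hderiv2 : deriv^[2] (fun y => exp (g y)) x = exp (g x) * (g' x ^ 2 + g'' x) := by
    rw [Function.iterate_succ_apply, Function.iterate_one,
      (((hg' x hx).exp.mul (hg'' x hx)).congr_of_eventuallyEq hderiv).deriv]
    ring
  rw [hderiv2]
  exact mul_pos (exp_pos _) (hpos x hx)

noncomputable def deltaExponent (r : ℝ) : ℝ := log (r + 1) * ((r - 1) / r)

noncomputable def deltaExponent' (r : ℝ) : ℝ := log (r + 1) / r ^ 2 + (r - 1) / (r * (r + 1))

noncomputable def deltaExponent'' (r : ℝ) : ℝ :=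
  1 / (r ^ 2 * (r + 1)) - 2 * log (r + 1) / r ^ 3 + (1 + 2 * r - r ^ 2) / (r * (r + 1)) ^ 2

theorem deltaExponent_one : deltaExponent 1 = 0 := by simp [deltaExponent]

theorem deltaExponent_pos {r : ℝ} (hr : 1 < r) : 0 < deltaExponent r :=
  mul_pos (log_pos (by linarith)) (div_pos (by linarith) (by linarith))

theorem add_one_rpow_eq_exp_deltaExponent {r : ℝ} (hr : -1 < r) :
    (r + 1) ^ ((r - 1) / r) = exp (deltaExponent r) := by
  rw [rpow_def_of_pos (by linarith), deltaExponent]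

theorem hasDerivAt_deltaExponent {r : ℝ} (hr : 0 < r) :
    HasDerivAt deltaExponent (deltaExponent' r) r := by
  have hlog := ((hasDerivAt_id' r).add_const 1).log (by positivity)
  have hfrac := ((hasDerivAt_id' r).sub_const 1).fun_div (hasDerivAt_id' r) hr.ne'
  refine (hlog.fun_mul hfrac).congr_deriv ?_
  rw [deltaExponent']
  field_simp
  ring

theorem hasDerivAt_deltaExponent' {r : ℝ} (hr : 0 < r) :
    HasDerivAt deltaExponent' (deltaExponent'' r) r := by
  have hlog := ((hasDerivAt_id' r).add_const 1).log (by positivity)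
  have hfst := hlog.fun_div (hasDerivAt_pow 2 r) (by positivity)
  have hsnd := ((hasDerivAt_id' r).sub_const 1).fun_div
    ((hasDerivAt_id' r).fun_mul ((hasDerivAt_id' r).add_const 1)) (by positivity)
  refine (hfst.add hsnd).congr_deriv ?_
  rw [deltaExponent'']
  field_simp
  ring

theorem deltaExponent'_sq_add_deltaExponent''_pos {r : ℝ} (hr : 1 < r) :
    0 < deltaExponent' r ^ 2 + deltaExponent'' r := by
  have hr0 : 0 < r := by linarith
  have hr1 : 0 < r - 1 := by linarith
  have key : deltaExponent' r ^ 2 + deltaExponent'' r =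
      (((r + 1) * log (r + 1) - 2 * r) ^ 2 + r ^ 2 * (r - 1)) / (r ^ 4 * (r + 1) ^ 2) := by
    simp only [deltaExponent', deltaExponent'']
    field_simp
    ring
  rw [key]
  positivity

theorem strictConvexOn_exp_deltaExponent :
    StrictConvexOn ℝ (Ici 1) (fun r => exp (deltaExponent r)) := by
  have hcont : ContinuousOn deltaExponent (Ici 1) :=
    ((continuousOn_id.add continuousOn_const).log fun r (hr : 1 ≤ r) =>
      (show (0 : ℝ) < r + 1 by linarith).ne').mul
    (((continuousOn_id.sub continuousOn_const).div continuousOn_id) fun r (hr : 1 ≤ r) =>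
      (zero_lt_one.trans_le hr).ne')
  refine strictConvexOn_exp_comp (g' := deltaExponent') (g'' := deltaExponent'') (convex_Ici 1)
    hcont ?_ ?_ ?_ <;> rw [interior_Ici]
  · exact fun r hr => hasDerivAt_deltaExponent (zero_lt_one.trans hr)
  · exact fun r hr => hasDerivAt_deltaExponent' (zero_lt_one.trans hr)
  · exact fun r hr => deltaExponent'_sq_add_deltaExponent''_pos hr

/-- The threshold function `δ(r) = (r-1)/((r+1)^((r-1)/r) - 1) - 1` is strictly
decreasing on `(1, ∞)`. -/
theorem delta_strictAntiOn :
    StrictAntiOn (fun r : ℝ => (r - 1) / ((r + 1) ^ ((r - 1) / r) - 1) - 1)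
      (Set.Ioi 1) := by
  have hanti := strictConvexOn_exp_deltaExponent.secant_inv_strictAntiOn fun r hr =>
    exp_lt_exp.2 (deltaExponent_one ▸ deltaExponent_pos hr)
  have hrpow : EqOn (fun r => (r - 1) / (exp (deltaExponent r) - exp (deltaExponent 1)))
      (fun r : ℝ => (r - 1) / ((r + 1) ^ ((r - 1) / r) - 1)) (Ioi 1) := fun r (hr : 1 < r) => by
    simp only [deltaExponent_one, exp_zero,
      add_one_rpow_eq_exp_deltaExponent (by linarith : -1 < r)]
  exact fun x hx y hy hxy => sub_lt_sub_right (hanti.congr hrpow hx hy hxy) 1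
end

section
/- For fixed r ≥ 1, R(t,r) = ((2r+t)/(2r²))·log((2r+t)/t) − 1/r is strictly decreasing in t on [1, ∞) and lim_{t→∞} R(t,r) = 0; moreover R(2,1) = 2·log 2 − 1. -/
/-!
With `a = 2r` and `g a t = (a + t) * log ((a + t) / t)` we have `R t r = g a t / (2 r²) - 1 / r`.
The derivative of `g a` is `log ((a + t) / t) - a / t < 0` (as `log x < x - 1`), and
`g a t → a` as `t → ∞` because `t * log (1 + a / t) → a`; the limit of `R` is then `2r / (2r²) - 1 / r = 0`.
-/

open Real Filter Set Topology

theorem hasDerivAt_add_mul_log_add_div {a t : ℝ} (ht : t ≠ 0) (hat : a + t ≠ 0) :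
    HasDerivAt (fun t => (a + t) * log ((a + t) / t)) (log ((a + t) / t) - a / t) t := by
  have hsum : HasDerivAt (fun t => a + t) 1 t := (hasDerivAt_id t).const_add a
  have hquot : HasDerivAt (fun t => (a + t) / t) ((1 * t - (a + t) * 1) / t ^ 2) t :=
    hsum.div (hasDerivAt_id t) ht
  refine (hsum.fun_mul (hquot.log (div_ne_zero hat ht))).congr_deriv ?_
  field_simp
  ring

theorem log_add_div_lt_div {a t : ℝ} (ha : 0 < a) (ht : 0 < t) : log ((a + t) / t) < a / t := by
  have hpos : 0 < (a + t) / t := by positivity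
  have hne : (a + t) / t ≠ 1 := by
    rw [Ne, div_eq_one_iff_eq ht.ne']
    linarith
  calc log ((a + t) / t) < (a + t) / t - 1 := log_lt_sub_one_of_pos hpos hne
    _ = a / t := by field_simp; ring

theorem strictAntiOn_add_mul_log_add_div {a : ℝ} (ha : 0 < a) :
    StrictAntiOn (fun t => (a + t) * log ((a + t) / t)) (Ioi 0) := by
  have hderiv : ∀ t ∈ Ioi (0 : ℝ),
      HasDerivAt (fun t => (a + t) * log ((a + t) / t)) (log ((a + t) / t) - a / t) t :=
    fun t (ht : 0 < t) => hasDerivAt_add_mul_log_add_div ht.ne' (by positivity)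
  refine strictAntiOn_of_hasDerivWithinAt_neg (f' := fun t => log ((a + t) / t) - a / t)
    (convex_Ioi 0) (fun t ht => (hderiv t ht).continuousAt.continuousWithinAt) ?_ ?_
  · rw [interior_Ioi]
    exact fun t ht => (hderiv t ht).hasDerivWithinAt
  · rw [interior_Ioi]
    exact fun t (ht : 0 < t) => sub_neg.2 (log_add_div_lt_div ha ht)

theorem tendsto_add_mul_log_add_div_atTop (a : ℝ) :
    Tendsto (fun t => (a + t) * log ((a + t) / t)) atTop (𝓝 a) := by
  have hlog : Tendsto (fun t => log (1 + a / t)) atTop (𝓝 0) := by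
    have h : Tendsto (fun t => 1 + a / t) atTop (𝓝 1) := by
      simpa using tendsto_const_nhds.add ((tendsto_const_nhds (x := a)).div_atTop tendsto_id)
    simpa using h.log one_ne_zero
  have hsplit : Tendsto (fun t => a * log (1 + a / t) + t * log (1 + a / t)) atTop (𝓝 a) := by
    simpa using (hlog.const_mul a).add (tendsto_mul_log_one_add_div_atTop a)
  refine hsplit.congr' ?_
  filter_upwards [eventually_gt_atTop 0] with t ht
  rw [← add_mul, one_add_div ht.ne', add_comm t a]

/-- For fixed `r ≥ 1`, `R(t,r) = ((2r+t)/(2r²))·log((2r+t)/t) − 1/r` is strictly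
decreasing in `t` on `[1, ∞)` with limit `0` as `t → ∞`; moreover
`R(2,1) = 2 log 2 − 1`. -/
theorem R_properties (r : ℝ) (hr : 1 ≤ r) :
    let R : ℝ → ℝ → ℝ := fun t r => (2 * r + t) / (2 * r ^ 2) * Real.log ((2 * r + t) / t) - 1 / r
    StrictAntiOn (fun t => R t r) (Set.Ici 1) ∧
      Tendsto (fun t => R t r) atTop (nhds 0) ∧
      R 2 1 = 2 * Real.log 2 - 1 := by
  intro R
  have hr0 : 0 < r := zero_lt_one.trans_le hr
  have hR : ∀ t, R t r = (2 * r + t) * log ((2 * r + t) / t) / (2 * r ^ 2) - 1 / r := by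
    intro t
    simp only [R]
    ring
  refine ⟨?_, ?_, ?_⟩
  · intro s hs t ht hst
    have hg := strictAntiOn_add_mul_log_add_div (by positivity : 0 < 2 * r)
      (zero_lt_one.trans_le hs : (0 : ℝ) < s) (zero_lt_one.trans_le ht : (0 : ℝ) < t) hst
    simp only [hR]
    gcongr
  · have hlim : 2 * r / (2 * r ^ 2) - 1 / r = 0 := by field_simp; ring
    simp only [hR]
    rw [← hlim]
    exact ((tendsto_add_mul_log_add_div_atTop (2 * r)).div_const (2 * r ^ 2)).sub_const (1 / r)
  · norm_num [R]
end
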